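/- arXiv:1901.04845 — 4 statements merged into one kernel-verified Lean document; each statement's English description precedes it below -/
import Mathlib

section
/- If D is a finite kernel-perfect digraph, then D possesses a Grundy function. -/
/-- `N` is a kernel of the subdigraph of `A` induced by `X`: `N ⊆ X`, `N` is
independent, and every vertex of `X` outside `N` has an arc to some vertex of `N`. -/
def IsKernelIn {V : Type*} (A : V → V → Prop) (X N : Set V) : Prop :=
  N ⊆ X ∧ (∀ x ∈ N, ∀ y ∈ N, ¬ A x y) ∧ ∀ z ∈ X, z ∉ N → ∃ y ∈ N, A z y

/-- `g` is a Grundy function on the digraph with arc relation `A`. -/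
def IsGrundy {V : Type*} (A : V → V → Prop) (g : V → ℕ) : Prop :=
  ∀ x, IsLeast {n : ℕ | ∀ y, A x y → g y ≠ n} (g x)

/-!
Peel off kernels repeatedly: starting from `X₀ = V`, let `Xₖ₊₁ = Xₖ \ Nₖ` where `Nₖ` is a kernel
of the subdigraph induced by `Xₖ`. Kernels of nonempty digraphs are nonempty, so in a finite
digraph every vertex lies in exactly one layer `Nₖ`, and `g x = k` for `x ∈ Nₖ` is a Grundy
function: independence of `Nₖ` gives `g y ≠ g x` along arcs, and for `n < g x` the vertex `x`
lies in `Xₙ \ Nₙ`, so it has an arc into `Nₙ`.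
-/

open Set

section Peeling

variable {V : Type*}

theorem IsKernelIn.nonempty {A : V → V → Prop} {X N : Set V} (hN : IsKernelIn A X N)
    (hX : X.Nonempty) : N.Nonempty := by
  obtain ⟨x, hx⟩ := hX
  by_cases hxN : x ∈ N
  · exact ⟨x, hxN⟩
  · obtain ⟨y, hy, -⟩ := hN.2.2 x hx hxN
    exact ⟨y, hy⟩

def peel (N : Set V → Set V) : ℕ → Set V
  | 0 => univ
  | k + 1 => peel N k \ N (peel N k)

section Peel

variable (N : Set V → Set V)

theorem peel_antitone : Antitone (peel N) :=
  antitone_nat_of_succ_le fun _ => sdiff_subset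

theorem mem_peel_and_not_mem_peel_succ_iff {x : V} {k : ℕ} :
    x ∈ peel N k ∧ x ∉ peel N (k + 1) ↔ x ∈ peel N k ∧ x ∈ N (peel N k) := by
  simp only [peel, mem_sdiff, not_and, not_not]
  tauto

theorem exists_not_mem_peel [Finite V] (hN : ∀ X : Set V, X.Nonempty → (X ∩ N X).Nonempty)
    (x : V) : ∃ k, x ∉ peel N k := by
  by_contra! hx
  have hlt : StrictAnti (peel N) := strictAnti_nat_of_succ_lt fun k => by
    obtain ⟨y, hyX, hyN⟩ := hN _ ⟨x, hx k⟩
    exact ssubset_of_subset_not_subset sdiff_subset fun h => (h hyX).2 hyN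
  exact not_injective_infinite_finite _ hlt.injective

theorem existsUnique_mem_peel_diff {x : V} (hx : ∃ k, x ∉ peel N k) :
    ∃! k, x ∈ peel N k ∧ x ∉ peel N (k + 1) := by
  classical
  obtain ⟨k, hk⟩ : ∃ k, Nat.find hx = k + 1 :=
    Nat.exists_eq_add_one_of_ne_zero fun h0 => (h0 ▸ Nat.find_spec hx) (mem_univ x)
  have hout : x ∉ peel N (k + 1) := hk ▸ Nat.find_spec hx
  have hin : ∀ j ≤ k, x ∈ peel N j := fun j hj => not_not.mp (Nat.find_min hx (by omega))
  refine ⟨k, ⟨hin k le_rfl, hout⟩, fun j ⟨hj, hj'⟩ => le_antisymm ?_ ?_⟩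
  · by_contra! h
    exact hout (peel_antitone N h hj)
  · by_contra! h
    exact hj' (hin (j + 1) h)

end Peel

theorem isGrundy_of_peel_kernels {A : V → V → Prop} {N : Set V → Set V}
    (hN : ∀ X, IsKernelIn A X (N X)) {g : V → ℕ}
    (hg : ∀ x k, g x = k ↔ x ∈ peel N k ∧ x ∈ N (peel N k)) : IsGrundy A g := by
  intro x
  obtain ⟨-, hxN⟩ := (hg x (g x)).mp rfl
  refine ⟨fun y hxy hgy => (hN _).2.1 x hxN y ((hg y (g x)).mp hgy).2 hxy, fun n hn => ?_⟩
  by_contra! hlt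
  have hxX : x ∈ peel N n := peel_antitone N hlt.le ((hN _).1 hxN)
  have hxNn : x ∉ N (peel N n) := fun h => hlt.ne' ((hg x n).mpr ⟨hxX, h⟩)
  obtain ⟨y, hyN, hxy⟩ := (hN _).2.2 x hxX hxNn
  exact hn y hxy ((hg y n).mpr ⟨(hN _).1 hyN, hyN⟩)

end Peeling

theorem kernelPerfect_has_grundy {V : Type*} [Fintype V] (A : V → V → Prop)
    (h : ∀ X : Set V, ∃ N : Set V, IsKernelIn A X N) :
    ∃ g : V → ℕ, IsGrundy A g := by
  choose N hN using h
  have hexit : ∀ x, ∃ k, x ∉ peel N k :=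
    exists_not_mem_peel N fun X hX => by
      obtain ⟨y, hy⟩ := (hN X).nonempty hX
      exact ⟨y, (hN X).1 hy, hy⟩
  choose g hg using fun x => existsUnique_mem_peel_diff N (hexit x)
  refine ⟨g, isGrundy_of_peel_kernels hN fun x k => ?_⟩
  rw [← mem_peel_and_not_mem_peel_succ_iff]
  exact ⟨fun hk => hk ▸ (hg x).1, fun hk => ((hg x).2 k hk).symm⟩
end

section
/- Let D₁, …, Dₙ be digraphs and suppose sᵢ is a semi-Grundy function on Dᵢ for each i = 1, …, n. Then the function S(x₁,…,xₙ) = s₁(x₁) + s₂(x₂) + … + sₙ(xₙ) (ordinary sum of integers) is a semi-Grundy function on the cartesian sum D₁ + D₂ + … + Dₙ. -/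
/-- `s` is a semi-Grundy function on the digraph with arc relation `A`. -/
def IsSemiGrundy {V : Type*} (A : V → V → Prop) (s : V → ℕ) : Prop :=
  (∀ x y, A x y → s y ≠ s x) ∧
    (∀ x y, A x y → s x < s y → ∃ z, A y z ∧ s z = s x)

/-- Arc relation of the cartesian sum `D₁ + ⋯ + Dₙ`. -/
def CartSumArc {n : ℕ} {V : Fin n → Type*} (A : ∀ i, V i → V i → Prop)
    (x y : ∀ i, V i) : Prop :=
  ∃ j, A j (x j) (y j) ∧ ∀ i, i ≠ j → x i = y i

/-! An arc of the cartesian sum moves a single coordinate `j`, so the total `∑ i, s i (x i)`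
changes exactly as `s j` does. Both semi-Grundy conditions thereby reduce to those of `s j`,
and the out-neighbour supplied by `s j` lifts to the sum by changing coordinate `j` alone. -/

section CartSum

variable {n : ℕ} {V : Fin n → Type*}

theorem cartSumArc_iff (A : ∀ i, V i → V i → Prop) (x y : ∀ i, V i) :
    CartSumArc A x y ↔ ∃ j b, A j (x j) b ∧ y = Function.update x j b := by
  constructor
  · rintro ⟨j, hA, hxy⟩
    refine ⟨j, y j, hA, funext fun i => ?_⟩
    rcases eq_or_ne i j with rfl | hij
    · simp
    · simp [Function.update_of_ne hij, hxy i hij]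
  · rintro ⟨j, b, hA, rfl⟩
    exact ⟨j, by simpa using hA, fun i hij => (Function.update_of_ne hij b x).symm⟩

theorem sum_apply_update_add {M : Type*} [AddCommMonoid M] (s : ∀ i, V i → M)
    (x : ∀ i, V i) (j : Fin n) (b : V j) :
    ∑ i, s i (Function.update x j b i) + s j (x j) = ∑ i, s i (x i) + s j b := by
  have hrest : ∑ i ∈ Finset.univ.erase j, s i (Function.update x j b i)
      = ∑ i ∈ Finset.univ.erase j, s i (x i) :=
    Finset.sum_congr rfl fun i hi => by rw [Function.update_of_ne (Finset.ne_of_mem_erase hi)]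
  rw [← Finset.add_sum_erase _ _ (Finset.mem_univ j), ← Finset.add_sum_erase _ _ (Finset.mem_univ j),
    hrest, Function.update_self]
  abel

end CartSum

theorem cartSum_semiGrundy_sum {n : ℕ} {V : Fin n → Type*}
    (A : ∀ i, V i → V i → Prop) (s : ∀ i, V i → ℕ)
    (hs : ∀ i, IsSemiGrundy (A i) (s i)) :
    IsSemiGrundy (CartSumArc A) (fun x => ∑ i, s i (x i)) := by
  have hsum := sum_apply_update_add s
  constructor
  · intro x y hxy
    obtain ⟨j, b, hA, rfl⟩ := (cartSumArc_iff A x _).1 hxy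
    dsimp only
    have := (hs j).1 _ _ hA
    have := hsum x j b
    omega
  · rintro x y hxy hlt
    obtain ⟨j, b, hA, rfl⟩ := (cartSumArc_iff A x _).1 hxy
    dsimp only at hlt ⊢
    obtain ⟨z, hbz, hz⟩ := (hs j).2 _ _ hA (by have := hsum x j b; omega)
    refine ⟨Function.update x j z, (cartSumArc_iff A _ _).2 ⟨j, z, by simpa using hbz, by simp⟩, ?_⟩
    have := hsum x j z
    omega
end

section
/- Let D be a finite digraph and α = (α_v)_{v ∈ V(D)} a family of mutually disjoint finite digraphs with nonempty vertex sets. If D is kernel-perfect and each α_v has a semi-Grundy function, then the cartesian product σ(D,α) possesses a semi-Grundy function. -/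
/-- Arc relation of the cartesian product `σ(D,α)`, where `D` is the digraph on
`U` with arc relation `AD` and `α u` is the digraph on `W u` with arc relation
`Aα u` (the vertex sets are made mutually disjoint using a sigma type):
the arcs of each `α u`, together with all pairs `(x, y)` with `x ∈ V(α u)`,
`y ∈ V(α v)` and `(u,v)` an arc of `D`. -/
inductive SigmaArc {U : Type*} {W : U → Type*} (AD : U → U → Prop)
    (Aα : ∀ u, W u → W u → Prop) : (Σ u, W u) → (Σ u, W u) → Prop
  | inner (u : U) (x y : W u) : Aα u x y → SigmaArc AD Aα ⟨u, x⟩ ⟨u, y⟩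
  | cross (u v : U) (x : W u) (y : W v) : AD u v → SigmaArc AD Aα ⟨u, x⟩ ⟨v, y⟩

/-! Peel the product into layers: at each stage take a kernel `N` of the blocks still present
and remove, in every block of `N`, the vertices of least semi-Grundy value. This layer is a
semikernel of what is left: it is independent, and a vertex it points to either lies in the
same block at a higher level, where the block's semi-Grundy function finds an arc back, or lies
in a block outside `N`, which has an arc to a block of `N`. What is left is still upward closed
in every block, so the argument repeats, and numbering the layers in order gives a semi-Grundy
function. -/

section Peeling

variable {V : Type*}

def IsSemikernelIn (A : V → V → Prop) (Y B : Set V) : Prop :=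
  B ⊆ Y ∧ (∀ x ∈ B, ∀ y ∈ B, ¬ A x y) ∧ ∀ x ∈ B, ∀ y ∈ Y, y ∉ B → A x y → ∃ z ∈ B, A y z

def IsSemiGrundyOn (A : V → V → Prop) (Y : Set V) (s : V → ℕ) : Prop :=
  (∀ x ∈ Y, ∀ y ∈ Y, A x y → s y ≠ s x) ∧
    (∀ x ∈ Y, ∀ y ∈ Y, A x y → s x < s y → ∃ z ∈ Y, A y z ∧ s z = s x)

theorem isSemiGrundyOn_univ {A : V → V → Prop} {s : V → ℕ} :
    IsSemiGrundyOn A Set.univ s ↔ IsSemiGrundy A s := by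
  simp [IsSemiGrundyOn, IsSemiGrundy]

open Classical in
theorem IsSemikernelIn.isSemiGrundyOn_ite {A : V → V → Prop} {Y B : Set V} {s : V → ℕ}
    (hB : IsSemikernelIn A Y B) (hs : IsSemiGrundyOn A (Y \ B) s) :
    IsSemiGrundyOn A Y (fun x => if x ∈ B then 0 else s x + 1) := by
  obtain ⟨hBY, hindep, habsorb⟩ := hB
  constructor
  · intro x hx y hy hxy
    by_cases hxB : x ∈ B <;> by_cases hyB : y ∈ B <;> simp only [hxB, hyB, if_true, if_false]
    · exact absurd hxy (hindep x hxB y hyB)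
    · omega
    · omega
    · simpa using hs.1 x ⟨hx, hxB⟩ y ⟨hy, hyB⟩ hxy
  · intro x hx y hy hxy hlt
    by_cases hxB : x ∈ B <;> by_cases hyB : y ∈ B <;>
      simp only [hxB, hyB, if_true, if_false] at hlt ⊢
    · omega
    · obtain ⟨z, hzB, hyz⟩ := habsorb x hxB y hy hyB hxy
      exact ⟨z, hBY hzB, hyz, if_pos hzB⟩
    · omega
    · obtain ⟨z, ⟨hzY, hzB⟩, hyz, hsz⟩ := hs.2 x ⟨hx, hxB⟩ y ⟨hy, hyB⟩ hxy (by omega)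
      exact ⟨z, hzY, hyz, by simp [hzB, hsz]⟩

theorem exists_isSemiGrundyOn_of_forall_exists_semikernel [Finite V] {A : V → V → Prop}
    (P : Set V → Prop)
    (hpeel : ∀ Y, P Y → Y.Nonempty → ∃ B, B.Nonempty ∧ IsSemikernelIn A Y B ∧ P (Y \ B))
    (Y : Set V) (hY : P Y) : ∃ s, IsSemiGrundyOn A Y s := by
  induction Y using WellFoundedLT.induction with
  | _ Y ih =>
  rcases Y.eq_empty_or_nonempty with rfl | hne
  · exact ⟨0, by simp [IsSemiGrundyOn]⟩
  obtain ⟨B, ⟨b, hb⟩, hB, hYB⟩ := hpeel Y hY hne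
  obtain ⟨s, hs⟩ := ih (Y \ B) (Set.sdiff_ssubset_left_iff.mpr ⟨b, hB.1 hb, hb⟩) hYB
  exact ⟨_, hB.isSemiGrundyOn_ite hs⟩

end Peeling

section CartesianProduct

variable {U : Type*} {W : U → Type*}

def IsUpperInFibers (s : ∀ u, W u → ℕ) (Y : Set (Σ u, W u)) : Prop :=
  ∀ u x y, ⟨u, x⟩ ∈ Y → s u x ≤ s u y → ⟨u, y⟩ ∈ Y

def bottomLayer (s : ∀ u, W u → ℕ) (N : Set U) (Y : Set (Σ u, W u)) : Set (Σ u, W u) :=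
  {p | p ∈ Y ∧ p.1 ∈ N ∧ ∀ y, ⟨p.1, y⟩ ∈ Y → s p.1 p.2 ≤ s p.1 y}

theorem exists_mk_mem_bottomLayer (s : ∀ u, W u → ℕ) {N : Set U} {Y : Set (Σ u, W u)} {u : U}
    (huN : u ∈ N) (huY : u ∈ Sigma.fst '' Y) : ∃ x, ⟨u, x⟩ ∈ bottomLayer s N Y := by
  obtain ⟨⟨_, x₀⟩, hx₀, rfl⟩ := huY
  obtain ⟨x, hx, hmin⟩ :=
    (InvImage.wf (s _) wellFounded_lt).has_min {x | (⟨_, x⟩ : Σ u, W u) ∈ Y} ⟨x₀, hx₀⟩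
  exact ⟨x, hx, huN, fun y hy => not_lt.mp (hmin y hy)⟩

theorem IsUpperInFibers.diff_bottomLayer {s : ∀ u, W u → ℕ} {Y : Set (Σ u, W u)}
    (hY : IsUpperInFibers s Y) (N : Set U) : IsUpperInFibers s (Y \ bottomLayer s N Y) := by
  rintro u x y ⟨hx, hxB⟩ hxy
  refine ⟨hY u x y hx hxy, fun ⟨_, huN, hmin⟩ => hxB ⟨hx, huN, fun z hz => ?_⟩⟩
  exact hxy.trans (hmin z hz)

variable {AD : U → U → Prop} {Aα : ∀ u, W u → W u → Prop} {s : ∀ u, W u → ℕ}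
  {N : Set U} {Y : Set (Σ u, W u)}

theorem bottomLayer_nonempty (hN : IsKernelIn AD (Sigma.fst '' Y) N) (hY : Y.Nonempty) :
    (bottomLayer s N Y).Nonempty := by
  obtain ⟨p, hp⟩ := hY
  have hpY : p.1 ∈ Sigma.fst '' Y := ⟨p, hp, rfl⟩
  obtain ⟨u, huN⟩ : ∃ u, u ∈ N := by
    by_cases hpN : p.1 ∈ N
    · exact ⟨_, hpN⟩
    · obtain ⟨u, huN, -⟩ := hN.2.2 _ hpY hpN
      exact ⟨u, huN⟩
  obtain ⟨x, hx⟩ := exists_mk_mem_bottomLayer s huN (hN.1 huN)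
  exact ⟨_, hx⟩

theorem isSemikernelIn_bottomLayer (hs : ∀ u, IsSemiGrundy (Aα u) (s u))
    (hN : IsKernelIn AD (Sigma.fst '' Y) N) (hY : IsUpperInFibers s Y) :
    IsSemikernelIn (SigmaArc AD Aα) Y (bottomLayer s N Y) := by
  obtain ⟨hNY, hNindep, hNabsorb⟩ := hN
  refine ⟨fun p hp => hp.1, ?_, ?_⟩
  · rintro _ ⟨hx, huN, hxmin⟩ _ ⟨hy, hvN, hymin⟩ (⟨u, x, y, hxy⟩ | ⟨u, v, x, y, huv⟩)
    · exact (hs u).1 x y hxy (le_antisymm (hymin x hx) (hxmin y hy))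
    · exact hNindep u huN v hvN huv
  · rintro _ ⟨hx, huN, hmin⟩ _ hy hyB (⟨u, x, y, hxy⟩ | ⟨u, v, x, y, huv⟩)
    · have hlt : s u x < s u y := lt_of_le_of_ne (hmin y hy) ((hs u).1 x y hxy).symm
      obtain ⟨z, hyz, hzx⟩ := (hs u).2 x y hxy hlt
      refine ⟨⟨u, z⟩, ⟨hY u x z hx hzx.ge, huN, fun w hw => hzx ▸ hmin w hw⟩, .inner u y z hyz⟩
    · have hvN : v ∉ N := fun hvN => hNindep u huN v hvN huv
      obtain ⟨w, hwN, hvw⟩ := hNabsorb v ⟨_, hy, rfl⟩ hvN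
      obtain ⟨z, hz⟩ := exists_mk_mem_bottomLayer s hwN (hNY hwN)
      exact ⟨_, hz, .cross v w y z hvw⟩

end CartesianProduct

theorem cartProd_semiGrundy_of_kernelPerfect_general {U : Type*} [Fintype U]
    {W : U → Type*} [∀ u, Fintype (W u)]
    (AD : U → U → Prop) (Aα : ∀ u, W u → W u → Prop)
    (hKP : ∀ X : Set U, ∃ N : Set U, IsKernelIn AD X N)
    (hα : ∀ u, ∃ s : W u → ℕ, IsSemiGrundy (Aα u) s) :
    ∃ S : (Σ u, W u) → ℕ, IsSemiGrundy (SigmaArc AD Aα) S := by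
  choose s hs using hα
  have hpeel : ∀ Y, IsUpperInFibers s Y → Y.Nonempty →
      ∃ B, B.Nonempty ∧ IsSemikernelIn (SigmaArc AD Aα) Y B ∧ IsUpperInFibers s (Y \ B) := by
    intro Y hY hne
    obtain ⟨N, hN⟩ := hKP (Sigma.fst '' Y)
    exact ⟨bottomLayer s N Y, bottomLayer_nonempty hN hne, isSemikernelIn_bottomLayer hs hN hY,
      hY.diff_bottomLayer N⟩
  obtain ⟨S, hS⟩ := exists_isSemiGrundyOn_of_forall_exists_semikernel _ hpeel Set.univ
    (fun _ _ _ _ _ => Set.mem_univ _)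
  exact ⟨S, isSemiGrundyOn_univ.mp hS⟩

theorem cartProd_semiGrundy_of_kernelPerfect {U : Type*} [Fintype U]
    {W : U → Type*} [∀ u, Fintype (W u)] [∀ u, Nonempty (W u)]
    (AD : U → U → Prop) (Aα : ∀ u, W u → W u → Prop)
    (hKP : ∀ X : Set U, ∃ N : Set U, IsKernelIn AD X N)
    (hα : ∀ u, ∃ s : W u → ℕ, IsSemiGrundy (Aα u) s) :
    ∃ S : (Σ u, W u) → ℕ, IsSemiGrundy (SigmaArc AD Aα) S :=
  cartProd_semiGrundy_of_kernelPerfect_general AD Aα hKP hα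
end

section
/- For every natural number n ≥ 2 there exists a finite digraph D with two Grundy functions g₁ and g₂ such that max{g₁(x) : x ∈ V(D)} = 1 and max{g₂(x) : x ∈ V(D)} = n. -/
open Finset Function

def crossArcs {α β : Type*} (x y : α × β) : Prop :=
  x.1 ≠ y.1 ∧ x.2 ≠ y.2

theorem crossArcs_swap {α β : Type*} (x y : α × β) :
    crossArcs x.swap y.swap ↔ crossArcs x y :=
  and_comm

theorem IsGrundy.comp_equiv {V W : Type*} {A : V → V → Prop} {g : V → ℕ}
    (h : IsGrundy A g) (e : W ≃ V) : IsGrundy (fun x y => A (e x) (e y)) (g ∘ e) := by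
  intro x
  have hset : {n : ℕ | ∀ y, A (e x) (e y) → g (e y) ≠ n} =
      {n : ℕ | ∀ y, A (e x) y → g y ≠ n} := by
    ext n
    exact ⟨fun hn y => e.apply_symm_apply y ▸ hn (e.symm y), fun hn y => hn (e y)⟩
  simpa only [comp_apply, hset] using h (e x)

theorem isGrundy_crossArcs_fst {p : ℕ} {β : Type*} [Nontrivial β] :
    IsGrundy (crossArcs (α := Fin p) (β := β)) (fun x => x.1) := by
  rintro ⟨i, a⟩
  refine ⟨fun y hy hval => hy.1 (Fin.ext hval.symm), fun c hc => ?_⟩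
  by_contra! hci
  obtain ⟨b, hba⟩ := exists_ne a
  exact hc (⟨c, hci.trans i.isLt⟩, b) ⟨Fin.ne_of_val_ne hci.ne', hba.symm⟩ rfl

theorem isGrundy_crossArcs_snd {α : Type*} [Nontrivial α] {q : ℕ} :
    IsGrundy (crossArcs (α := α) (β := Fin q)) (fun x => x.2) := by
  have h := isGrundy_crossArcs_fst.comp_equiv (Equiv.prodComm α (Fin q))
  have hA : (fun x y => crossArcs (Equiv.prodComm α (Fin q) x) (Equiv.prodComm α (Fin q) y))
      = crossArcs := by
    ext x y
    exact crossArcs_swap x y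
  rwa [hA] at h

theorem Finset.sup_univ_comp_equiv {α β γ : Type*} [Fintype α] [Fintype β]
    [SemilatticeSup γ] [OrderBot γ] (f : β → γ) (e : α ≃ β) :
    (univ : Finset α).sup (f ∘ e) = univ.sup f := by
  rw [← map_univ_equiv e, sup_map]
  rfl

theorem Fin.sup_univ_val (m : ℕ) : (univ : Finset (Fin (m + 1))).sup (fun i => (i : ℕ)) = m :=
  le_antisymm (Finset.sup_le fun i _ => Fin.is_le i)
    (Finset.le_sup_of_le (mem_univ (Fin.last m)) le_rfl)

theorem Finset.sup_univ_fst {α β γ : Type*} [Fintype α] [Fintype β] [Nonempty β]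
    [SemilatticeSup γ] [OrderBot γ] (f : α → γ) :
    (univ : Finset (α × β)).sup (fun x => f x.1) = univ.sup f := by
  rw [← univ_product_univ, sup_product_left]
  simp only [sup_const univ_nonempty]

theorem Finset.sup_univ_snd {α β γ : Type*} [Fintype α] [Fintype β] [Nonempty α]
    [SemilatticeSup γ] [OrderBot γ] (f : β → γ) :
    (univ : Finset (α × β)).sup (fun x => f x.2) = univ.sup f := by
  rw [← univ_product_univ, sup_product_right]
  simp only [sup_const univ_nonempty]

theorem exists_digraph_grundy_max_one_and_n (n : ℕ) (hn : 2 ≤ n) :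
    ∃ (k : ℕ) (A : Fin k → Fin k → Prop) (g₁ g₂ : Fin k → ℕ),
      IsGrundy A g₁ ∧ IsGrundy A g₂ ∧
        Finset.univ.sup g₁ = 1 ∧ Finset.univ.sup g₂ = n := by
  have : Nontrivial (Fin (n + 1)) := Fin.nontrivial_iff_two_le.mpr (by omega)
  let e : Fin (2 * (n + 1)) ≃ Fin 2 × Fin (n + 1) := finProdFinEquiv.symm
  refine ⟨2 * (n + 1), fun x y => crossArcs (e x) (e y), (fun x => (x.1 : ℕ)) ∘ e,
    (fun x => (x.2 : ℕ)) ∘ e, isGrundy_crossArcs_fst.comp_equiv e,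
    isGrundy_crossArcs_snd.comp_equiv e, ?_, ?_⟩
  · rw [sup_univ_comp_equiv, sup_univ_fst, Fin.sup_univ_val]
  · rw [sup_univ_comp_equiv, sup_univ_snd, Fin.sup_univ_val]
end
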